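/- arXiv:1612.08154 — 4 statements merged into one kernel-verified Lean document; each statement's English description precedes it below -/
import Mathlib

section
/- Let Q₁ and Q₂ be complete deterministic automata over Σ and let (u,v) ∈ Σ* × Σ⁺. Let (u·v^{i₁}, v^{j₁}) and (u·v^{i₂}, v^{j₂}) be the normalizations of (u,v) with respect to Q₁ and Q₂ respectively. Then the normalization of (u,v) with respect to the product automaton Q₁ × Q₂ is (u·v^i, v^j) where i = max(i₁, i₂) and j = lcm(j₁, j₂). -/
open Classical

/-- `wpow v n` is the word `v` repeated `n` times. -/
def wpow {α : Type} (v : List α) : ℕ → List α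
  | 0 => []
  | n + 1 => wpow v n ++ v

/-- The ultimately periodic infinite word `u·v^ω` (meaningful when `v ≠ []`). -/
def upWord {α : Type} [Inhabited α] (u v : List α) : ℕ → α := fun n =>
  if n < u.length then u.getD n default
  else v.getD ((n - u.length) % v.length) default

/-- `l` is a prefix of the infinite word `w`. -/
def prefOf {α : Type} [Inhabited α] (l : List α) (w : ℕ → α) : Prop :=
  ∀ i < l.length, w i = l.getD i default

/-- A complete deterministic automaton (no acceptance condition). -/
structure DetAuto (α : Type) : Type 1 where
  State : Type
  [fin : Fintype State]
  init : State
  step : State → α → State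

attribute [instance] DetAuto.fin

namespace DetAuto

variable {α : Type}

/-- The state reached from `q` after reading the finite word `w`. -/
def run (A : DetAuto α) (q : A.State) (w : List α) : A.State := w.foldl A.step q

/-- The state reached from the initial state after reading `w`. -/
def eval (A : DetAuto α) (w : List α) : A.State := A.run A.init w

/-- The (infinite) run of `A` on an infinite word `w`. -/
def runSeq (A : DetAuto α) (w : ℕ → α) : ℕ → A.State
  | 0 => A.init
  | n + 1 => A.step (A.runSeq w n) (w n)

lemma exists_rep (A : DetAuto α) (u v : List α) :
    ∃ i, ∃ j, 1 ≤ j ∧ A.eval (u ++ wpow v i) = A.eval (u ++ wpow v (i + j)) := by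
  obtain ⟨a, b, hab, hfab⟩ :=
    Finite.exists_ne_map_eq_of_infinite (fun n : ℕ => A.eval (u ++ wpow v n))
  rcases Nat.lt_or_gt_of_ne hab with h | h
  · exact ⟨a, b - a, by omega, by rw [Nat.add_sub_cancel' h.le]; exact hfab⟩
  · exact ⟨b, a - b, by omega, by rw [Nat.add_sub_cancel' h.le]; exact hfab.symm⟩

/-- The least `i` in the normalization of `(u,v)` w.r.t. `A`. -/
noncomputable def normI (A : DetAuto α) (u v : List α) : ℕ :=
  Nat.find (A.exists_rep u v)

lemma normI_spec (A : DetAuto α) (u v : List α) :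
    ∃ j, 1 ≤ j ∧ A.eval (u ++ wpow v (A.normI u v))
      = A.eval (u ++ wpow v (A.normI u v + j)) :=
  Nat.find_spec (A.exists_rep u v)

/-- The least `j` in the normalization of `(u,v)` w.r.t. `A`. -/
noncomputable def normJ (A : DetAuto α) (u v : List α) : ℕ :=
  Nat.find (A.normI_spec u v)

/-- The normalization `(x, y) = (u·v^i, v^j)` of `(u,v)` w.r.t. `A`. -/
noncomputable def normalize (A : DetAuto α) (u v : List α) : List α × List α :=
  (u ++ wpow v (A.normI u v), wpow v (A.normJ u v))

/-- The product automaton. -/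
def prod (A B : DetAuto α) : DetAuto α where
  State := A.State × B.State
  init := (A.init, B.init)
  step := fun p σ => (A.step p.1 σ, B.step p.2 σ)

end DetAuto

/-- A family of DFAs: a leading automaton and a progress DFA for each of its states. -/
structure FDFA (α : Type) : Type 1 where
  leading : DetAuto α
  pState : leading.State → Type
  [pFin : ∀ q, Fintype (pState q)]
  pInit : ∀ q, pState q
  pStep : ∀ q, pState q → α → pState q
  pAcc : ∀ q, Set (pState q)

attribute [instance] FDFA.pFin

namespace FDFA

variable {α : Type}

/-- The progress DFA at state `q` accepts the finite word `y`. -/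
def progAccept (F : FDFA α) (q : F.leading.State) (y : List α) : Prop :=
  y.foldl (F.pStep q) (F.pInit q) ∈ F.pAcc q

/-- `F` accepts the pair `(u, v)`: with `(x,y)` the normalization of `(u,v)` w.r.t.
the leading automaton, the progress DFA at the state reached on `x` accepts `y`. -/
noncomputable def Accept (F : FDFA α) (u v : List α) : Prop :=
  F.progAccept (F.leading.eval (F.leading.normalize u v).1) (F.leading.normalize u v).2

/-- `F` is saturated: acceptance of `(u,v)` depends only on the infinite word `u·v^ω`. -/
def Saturated [Inhabited α] (F : FDFA α) : Prop :=
  ∀ u v u' v' : List α, v ≠ [] → v' ≠ [] → upWord u v = upWord u' v' →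
    (F.Accept u v ↔ F.Accept u' v')

/-- The complement FDFA: same structure, complemented accepting states. -/
def compl (F : FDFA α) : FDFA α :=
  { F with pAcc := fun q => (F.pAcc q)ᶜ }

end FDFA

/-!
Reading `v` is a map `g` on states, and the state reached on `u·vⁿ` is `gⁿ (A.eval u)`. So the
normalization `(u·vⁱ, vʲ)` describes the orbit of `A.eval u` under `g`: `i` is the first time the
orbit hits a periodic point of `g`, and `j` is the minimal period of that point (the same for all
later points of the orbit). On the product automaton reading `v` is `Prod.map g₁ g₂`; a pair is
periodic iff both components are, which gives `max i₁ i₂`, and the minimal period of a pair is the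
`lcm` of the minimal periods of its components.
-/

open Function

section Dynamics

variable {σ τ : Type*} {f : σ → σ} {x : σ} {m n : ℕ}

lemma iterate_mem_periodicPts_of_le (h : f^[m] x ∈ periodicPts f) (hmn : m ≤ n) :
    f^[n] x ∈ periodicPts f := by
  obtain ⟨k, hk, hper⟩ := mem_periodicPts.1 h
  rw [← Nat.sub_add_cancel hmn, iterate_add_apply]
  exact mk_mem_periodicPts hk (hper.apply_iterate _)

lemma minimalPeriod_iterate_of_le (h : f^[m] x ∈ periodicPts f) (hmn : m ≤ n) :
    minimalPeriod f (f^[n] x) = minimalPeriod f (f^[m] x) := by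
  rw [← Nat.sub_add_cancel hmn, iterate_add_apply, minimalPeriod_apply_iterate h]

lemma mem_periodicPts_prodMap {g : τ → τ} {p : σ × τ} :
    p ∈ periodicPts (Prod.map f g) ↔ p.1 ∈ periodicPts f ∧ p.2 ∈ periodicPts g := by
  simp only [← minimalPeriod_pos_iff_mem_periodicPts, minimalPeriod_prodMap, Nat.lcm_pos_iff]

end Dynamics

namespace DetAuto

variable {α : Type} (A B : DetAuto α) (u v : List α)

lemma eval_append_wpow (n : ℕ) :
    A.eval (u ++ wpow v n) = (A.run · v)^[n] (A.eval u) := by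
  induction n with
  | zero => simp [wpow]
  | succ n ih =>
    rw [iterate_succ_apply', ← ih, wpow, ← List.append_assoc]
    simp only [eval, run, List.foldl_append]

lemma eval_wpow_eq_eval_wpow_add_iff (n j : ℕ) :
    A.eval (u ++ wpow v n) = A.eval (u ++ wpow v (n + j)) ↔
      IsPeriodicPt (A.run · v) j ((A.run · v)^[n] (A.eval u)) := by
  rw [IsPeriodicPt, IsFixedPt, eval_append_wpow, eval_append_wpow, add_comm, iterate_add_apply,
    eq_comm]

lemma exists_eval_wpow_eq_iff (n : ℕ) :
    (∃ j, 1 ≤ j ∧ A.eval (u ++ wpow v n) = A.eval (u ++ wpow v (n + j))) ↔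
      (A.run · v)^[n] (A.eval u) ∈ periodicPts (A.run · v) := by
  simp only [mem_periodicPts, eval_wpow_eq_eval_wpow_add_iff, Nat.one_le_iff_ne_zero,
    Nat.pos_iff_ne_zero]

lemma normI_le_iff {n : ℕ} :
    A.normI u v ≤ n ↔ (A.run · v)^[n] (A.eval u) ∈ periodicPts (A.run · v) := by
  rw [normI, Nat.find_le_iff]
  constructor
  · rintro ⟨m, hmn, hm⟩
    exact iterate_mem_periodicPts_of_le ((A.exists_eval_wpow_eq_iff u v m).1 hm) hmn
  · exact fun h => ⟨n, le_rfl, (A.exists_eval_wpow_eq_iff u v n).2 h⟩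

lemma normJ_eq_minimalPeriod :
    A.normJ u v = minimalPeriod (A.run · v) ((A.run · v)^[A.normI u v] (A.eval u)) := by
  have hper := (A.normI_le_iff u v).1 le_rfl
  apply le_antisymm
  · refine Nat.find_min' _ ⟨minimalPeriod_pos_of_mem_periodicPts hper, ?_⟩
    exact (A.eval_wpow_eq_eval_wpow_add_iff u v _ _).2 (isPeriodicPt_minimalPeriod _ _)
  · obtain ⟨hpos, heq⟩ := Nat.find_spec (A.normI_spec u v)
    exact ((A.eval_wpow_eq_eval_wpow_add_iff u v _ _).1 heq).minimalPeriod_le hpos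

lemma run_prod (p : (A.prod B).State) (w : List α) :
    (A.prod B).run p w = (A.run p.1 w, B.run p.2 w) := by
  induction w generalizing p with
  | nil => rfl
  | cons a w ih => exact ih ((A.prod B).step p a)

lemma eval_prod (w : List α) : (A.prod B).eval w = (A.eval w, B.eval w) :=
  A.run_prod B _ w

lemma run_prod_eq_prodMap : ((A.prod B).run · v) = Prod.map (A.run · v) (B.run · v) :=
  funext fun p => A.run_prod B p v

lemma iterate_run_prod (n : ℕ) (a : A.State) (b : B.State) :
    ((A.prod B).run · v)^[n] (a, b) = ((A.run · v)^[n] a, (B.run · v)^[n] b) := by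
  rw [run_prod_eq_prodMap]
  exact congrFun (Prod.map_iterate _ _ n) (a, b)

lemma mem_periodicPts_run_prod (a : A.State) (b : B.State) :
    (a, b) ∈ periodicPts ((A.prod B).run · v) ↔
      a ∈ periodicPts (A.run · v) ∧ b ∈ periodicPts (B.run · v) := by
  rw [run_prod_eq_prodMap]
  exact mem_periodicPts_prodMap

lemma minimalPeriod_run_prod (a : A.State) (b : B.State) :
    minimalPeriod ((A.prod B).run · v) (a, b) =
      Nat.lcm (minimalPeriod (A.run · v) a) (minimalPeriod (B.run · v) b) := by
  rw [run_prod_eq_prodMap]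
  exact minimalPeriod_prodMap _ _ (a, b)

lemma normI_prod : (A.prod B).normI u v = max (A.normI u v) (B.normI u v) :=
  eq_of_forall_ge_iff fun n => by
    rw [normI_le_iff, eval_prod, iterate_run_prod, max_le_iff, normI_le_iff, normI_le_iff]
    exact mem_periodicPts_run_prod A B v _ _

lemma normJ_prod : (A.prod B).normJ u v = Nat.lcm (A.normJ u v) (B.normJ u v) := by
  rw [normJ_eq_minimalPeriod, normI_prod, eval_prod, iterate_run_prod, minimalPeriod_run_prod,
    normJ_eq_minimalPeriod, normJ_eq_minimalPeriod,
    minimalPeriod_iterate_of_le ((A.normI_le_iff u v).1 le_rfl) (le_max_left _ _),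
    minimalPeriod_iterate_of_le ((B.normI_le_iff u v).1 le_rfl) (le_max_right _ _)]

end DetAuto

theorem product_normalization_general {α : Type} (Q₁ Q₂ : DetAuto α) (u v : List α) :
    (Q₁.prod Q₂).normI u v = max (Q₁.normI u v) (Q₂.normI u v) ∧
    (Q₁.prod Q₂).normJ u v = Nat.lcm (Q₁.normJ u v) (Q₂.normJ u v) :=
  ⟨Q₁.normI_prod Q₂ u v, Q₁.normJ_prod Q₂ u v⟩

/-- The normalization of `(u,v)` w.r.t. the product automaton `Q₁ × Q₂`
is `(u·v^i, v^j)` with `i = max(i₁,i₂)` and `j = lcm(j₁,j₂)`, where `(u·v^{i₁}, v^{j₁})`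
and `(u·v^{i₂}, v^{j₂})` are the normalizations w.r.t. `Q₁` and `Q₂`. -/
theorem product_normalization {α : Type} (Q₁ Q₂ : DetAuto α) (u v : List α)
    (hv : v ≠ []) :
    (Q₁.prod Q₂).normI u v = max (Q₁.normI u v) (Q₂.normI u v) ∧
    (Q₁.prod Q₂).normJ u v = Nat.lcm (Q₁.normJ u v) (Q₂.normJ u v) :=
  product_normalization_general Q₁ Q₂ u v
end

section
/- Let M, N ⊆ Σ* be languages of finite words with N nonempty-word languages satisfying M·N* = M and N⁺ = N. Then for every ultimately periodic infinite word w, w belongs to M·N^ω if and only if there exist u ∈ M and v ∈ N such that u·v^ω = w. -/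
open Classical

/-- `w ∈ M·N^ω`: `w` starts with a word of `M` followed by an infinite concatenation of
words from `N` (all nonempty, so that the finite concatenations determine `w`). -/
def memOmegaProd {α : Type} [Inhabited α] (M N : Set (List α)) (w : ℕ → α) : Prop :=
  ∃ m ∈ M, ∃ f : ℕ → List α, (∀ n, f n ∈ N) ∧
    ∀ k : ℕ, prefOf (m ++ ((List.range k).map f).flatten) w


/-!
If `u·v^ω = m·f₀·f₁·f₂⋯` with `m ∈ M` and all `fᵢ ∈ N`, the lengths of the prefixes
`m·f₀⋯f_{k-1}` take the same value modulo `|v|` at two indices `|u| ≤ k < k'`. Then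
`x = m·f₀⋯f_{k-1}` lies in `M` because `M·N* = M`, and `y = f_k⋯f_{k'-1}` lies in `N` because
`N⁺ = N`. Since `|v|` divides `|y|` and `x` reaches past the preperiod `u`, both `x·y^ω` and
`u·v^ω` are `|y|`-periodic from position `|x|` on, and they agree on their common prefix `x·y`;
hence they are equal.
-/

namespace Language

variable {α : Type*}

theorem append_flatten_mem_of_mul_kstar_eq {M N : Language α} (h : M * KStar.kstar N = M)
    {m : List α} (hm : m ∈ M) {l : List (List α)} (hl : ∀ y ∈ l, y ∈ N) :
    m ++ l.flatten ∈ M :=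
  h ▸ append_mem_mul hm (join_mem_kstar hl)

theorem flatten_mem_of_mul_kstar_eq {N : Language α} (h : N * KStar.kstar N = N)
    {l : List (List α)} (hne : l ≠ []) (hl : ∀ y ∈ l, y ∈ N) : l.flatten ∈ N := by
  obtain ⟨y, ys, rfl⟩ := List.exists_cons_of_ne_nil hne
  exact append_flatten_mem_of_mul_kstar_eq h (hl y (by simp)) fun z hz => hl z (by simp [hz])

end Language

theorem Nat.eq_of_forall_lt_of_periodic_from {β : Type*} {f g : ℕ → β} {a p : ℕ} (hp : 0 < p)
    (hf : ∀ n, a ≤ n → f (n + p) = f n) (hg : ∀ n, a ≤ n → g (n + p) = g n)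
    (hfg : ∀ n < a + p, f n = g n) : f = g := by
  funext n
  induction n using Nat.strong_induction_on with
  | _ n ih =>
    rcases lt_or_ge n (a + p) with hn | hn
    · exact hfg n hn
    · obtain ⟨k, rfl⟩ : ∃ k, n = k + p := ⟨n - p, by omega⟩
      rw [hf k (by omega), hg k (by omega), ih k (by omega)]

section upWord

variable {α : Type} [Inhabited α] {u v x y : List α} {n : ℕ}

theorem upWord_of_lt (hn : n < u.length) : upWord u v n = u.getD n default :=
  if_pos hn

theorem upWord_of_le (hn : u.length ≤ n) :
    upWord u v n = v.getD ((n - u.length) % v.length) default :=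
  if_neg (not_lt.2 hn)

theorem upWord_add_of_dvd {p : ℕ} (hn : u.length ≤ n) (hp : v.length ∣ p) :
    upWord u v (n + p) = upWord u v n := by
  obtain ⟨c, rfl⟩ := hp
  rw [upWord_of_le hn, upWord_of_le (by omega), Nat.sub_add_comm hn, Nat.add_mul_mod_self_left]

theorem prefOf_append_upWord : prefOf (u ++ v) (upWord u v) := by
  intro i hi
  rw [List.length_append] at hi
  rcases lt_or_ge i u.length with h | h
  · rw [upWord_of_lt h, List.getD_append _ _ _ _ h]
  · rw [upWord_of_le h, List.getD_append_right _ _ _ _ h, Nat.mod_eq_of_lt (by omega)]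

theorem upWord_append_self : upWord (u ++ v) v = upWord u v := by
  funext n
  rcases lt_or_ge n (u ++ v).length with h | h
  · rw [upWord_of_lt h]
    exact (prefOf_append_upWord n h).symm
  · have h' : u.length + v.length ≤ n := by simpa using h
    rw [upWord_of_le h, upWord_of_le (by omega), List.length_append,
      show n - u.length = n - (u.length + v.length) + v.length by omega, Nat.add_mod_right]

theorem prefOf_append_flatten_replicate (k : ℕ) :
    prefOf (u ++ (List.replicate k v).flatten) (upWord u v) := by
  induction k generalizing u with
  | zero =>
    rw [List.replicate_zero, List.flatten_nil, List.append_nil]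
    exact fun i hi => upWord_of_lt hi
  | succ k ih =>
    rw [List.replicate_succ, List.flatten_cons, ← List.append_assoc, ← upWord_append_self]
    exact ih

theorem upWord_eq_of_prefOf (hy : y ≠ []) (hu : u.length ≤ x.length)
    (hv : v.length ∣ y.length) (h : prefOf (x ++ y) (upWord u v)) : upWord x y = upWord u v :=
  Nat.eq_of_forall_lt_of_periodic_from (List.length_pos_iff.2 hy)
    (fun _ hn => upWord_add_of_dvd hn dvd_rfl) (fun _ hn => upWord_add_of_dvd (hu.trans hn) hv)
    fun n hn => by
      rw [← List.length_append] at hn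
      rw [prefOf_append_upWord n hn, h n hn]

theorem memOmegaProd_upWord {M N : Set (List α)} (hu : u ∈ M) (hv : v ∈ N) :
    memOmegaProd M N (upWord u v) := by
  refine ⟨u, hu, fun _ => v, fun _ => hv, fun k => ?_⟩
  rw [List.map_const', List.length_range]
  exact prefOf_append_flatten_replicate k

theorem exists_upWord_eq_of_memOmegaProd {M N : Language α} (hN : ∀ w ∈ N, w ≠ [])
    (hMN : M * KStar.kstar N = M) (hNplus : N * KStar.kstar N = N) (hv : v ≠ [])
    (h : memOmegaProd (M : Set (List α)) (N : Set (List α)) (upWord u v)) :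
    ∃ u' ∈ M, ∃ v' ∈ N, upWord u' v' = upWord u v := by
  obtain ⟨m, hm, f, hf, hpref⟩ := h
  have hfN : ∀ i, f i ∈ N := hf
  set P : ℕ → List α := fun k => m ++ ((List.range k).map f).flatten with hP
  have hP_add : ∀ k d, P (k + d) = P k ++ ((List.range d).map fun i => f (k + i)).flatten := by
    intro k d
    simp [hP, List.range_add, Function.comp_def]
  have hP_len : ∀ k, k ≤ (P k).length := by
    intro k
    induction k with
    | zero => exact Nat.zero_le _
    | succ k ih =>
      have hfk := List.length_pos_iff.2 (hN _ (hf k))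
      rw [hP_add k 1]
      simp only [List.length_append, List.range_one, List.map_cons, List.map_nil,
        List.flatten_cons, List.flatten_nil, List.append_nil, add_zero]
      omega
  obtain ⟨a, ha, b, -, hab, hmod⟩ := (Set.Ici_infinite u.length).exists_lt_map_eq_of_mapsTo
    (f := fun k => (P k).length % v.length) (t := Set.Iio v.length)
    (fun _ _ => Nat.mod_lt _ (List.length_pos_iff.2 hv)) (Set.finite_Iio _)
  set y := ((List.range (b - a)).map fun i => f (a + i)).flatten
  have hPb : P b = P a ++ y := by rw [← hP_add, Nat.add_sub_cancel' hab.le]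
  have hyN : y ∈ N := Language.flatten_mem_of_mul_kstar_eq hNplus
    (by simpa using Nat.sub_ne_zero_of_lt hab)
    (by simpa using fun i _ => hfN _)
  refine ⟨P a, Language.append_flatten_mem_of_mul_kstar_eq hMN hm (by simpa using fun i _ => hfN i),
    y, hyN, upWord_eq_of_prefOf (hN y hyN) (le_trans ha (hP_len a)) ?_ (hPb ▸ hpref b)⟩
  have hmod' : (P a).length + 0 ≡ (P a).length + y.length [MOD v.length] := by
    rw [add_zero, ← List.length_append, ← hPb]
    exact hmod
  exact Nat.modEq_zero_iff_dvd.1 (hmod'.add_left_cancel' _).symm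

end upWord

/-- If `M·N* = M` and `N⁺ = N` (with `N ⊆ Σ⁺`), then an ultimately
periodic word `w` is in `M·N^ω` iff `w = u·v^ω` for some `u ∈ M`, `v ∈ N`. -/
theorem ultimately_periodic_in_MNomega {α : Type} [Inhabited α]
    (M N : Language α) (hN : ∀ w ∈ N, w ≠ [])
    (hMN : M * (KStar.kstar N) = M) (hNplus : N * (KStar.kstar N) = N) :
    ∀ u v : List α, v ≠ [] →
      (memOmegaProd (M : Set (List α)) (N : Set (List α)) (upWord u v) ↔
        ∃ u' ∈ M, ∃ v' ∈ N, upWord u' v' = upWord u v) := by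
  intro u v hv
  refine ⟨exists_upWord_eq_of_memOmegaProd hN hMN hNplus hv, ?_⟩
  rintro ⟨u', hu', v', hv', hw⟩
  exact hw ▸ memOmegaProd_upWord hu' hv'
end

section
/- Let F = (Q, P) be a saturated FDFA. For states q of Q and accepting states f of P_q, define M_q = {u ∈ Σ* : Q(u) = q} and N_{q,f} = {v ∈ Σ* : δ(q,v) = q and P_q(v) = f and δ_q(f,v) = f}. Then the ω-language L = ⋃_{q, f ∈ F_q} M_q · N_{q,f}^ω satisfies: for every (u,v) ∈ Σ* × Σ⁺, u·v^ω ∈ L if and only if (u,v) is accepted by F. -/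
/-!
Let `u·v^ω = m·g₀·g₁⋯` with `m ∈ M_q` and `gᵢ ∈ N_{q,f}`. Two cut points past `u` at the same
phase modulo `|v|` enclose a block `w ∈ N_{q,f}` with `u·v^ω = x·w^ω` and `x ∈ M_q`. Since `w`
loops on `q`, the pair `(x, w)` is its own normalization, and it is accepted because
`P_q(w) = f ∈ F_q`; saturation transfers acceptance to `(u, v)`.

Conversely, let `(x, y)` be the normalization of an accepted `(u, v)` and `q = Q(x)`. Saturation
makes `P_q` accept every `yᵏ`. The states `P_q(yᵏ)` are eventually periodic, so some `n ≠ 0`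
has `δ_q(P_q(yⁿ), yⁿ) = P_q(yⁿ)`; then `yⁿ ∈ N_{q,f}` for the accepting state `f = P_q(yⁿ)`,
and `u·v^ω = x·(yⁿ)^ω ∈ L`.
-/

open Classical

/-- `M_q`: finite words on which the leading automaton reaches `q`. -/
def FDFA.Mset {α : Type} (F : FDFA α) (q : F.leading.State) : Set (List α) :=
  {u | F.leading.eval u = q}

/-- `N_{q,f}`: words `v` with `δ(q,v) = q`, `P_q(v) = f`, and `δ_q(f,v) = f`. -/
def FDFA.Nset {α : Type} (F : FDFA α) (q : F.leading.State) (f : F.pState q) :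
    Set (List α) :=
  {v | F.leading.run q v = q ∧ v.foldl (F.pStep q) (F.pInit q) = f ∧
    v.foldl (F.pStep q) f = f}

/-- Membership in `L = ⋃_{q, f ∈ F_q} M_q · N_{q,f}^ω` (nonempty period factors). -/
def FDFA.memL {α : Type} [Inhabited α] (F : FDFA α) (w : ℕ → α) : Prop :=
  ∃ q : F.leading.State, ∃ f ∈ F.pAcc q, ∃ m ∈ F.Mset q, ∃ g : ℕ → List α,
    (∀ n, g n ∈ F.Nset q f ∧ g n ≠ []) ∧
    ∀ k : ℕ, prefOf (m ++ ((List.range k).map g).flatten) w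

section Words

variable {α : Type}

lemma wpow_eq_flatten_replicate (v : List α) (n : ℕ) : wpow v n = (List.replicate n v).flatten := by
  induction n with
  | zero => rfl
  | succ n ih => rw [wpow, ih, List.replicate_succ', List.flatten_append, List.flatten_singleton]

lemma wpow_one (v : List α) : wpow v 1 = v := by
  simp [wpow_eq_flatten_replicate]

lemma wpow_add (v : List α) (a b : ℕ) : wpow v (a + b) = wpow v a ++ wpow v b := by
  rw [wpow_eq_flatten_replicate, wpow_eq_flatten_replicate, wpow_eq_flatten_replicate,
    List.replicate_add, List.flatten_append]

lemma wpow_mul (v : List α) (j k : ℕ) : wpow (wpow v j) k = wpow v (j * k) := by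
  induction k with
  | zero => rfl
  | succ k ih => rw [wpow, ih, ← wpow_add, Nat.mul_succ]

lemma length_wpow (v : List α) (n : ℕ) : (wpow v n).length = n * v.length := by
  simp [wpow_eq_flatten_replicate]

lemma wpow_ne_nil {v : List α} (hv : v ≠ []) {n : ℕ} (hn : n ≠ 0) : wpow v n ≠ [] := by
  simp [wpow_eq_flatten_replicate, hv, hn]

lemma foldl_wpow {σ : Type} (f : σ → α → σ) (y : List α) (k : ℕ) (s : σ) :
    (wpow y k).foldl f s = (fun t => y.foldl f t)^[k] s := by
  induction k with
  | zero => rfl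
  | succ k ih => rw [wpow, List.foldl_append, ih, Function.iterate_succ_apply']

lemma foldl_flatten_eq_self {σ : Type} {f : σ → α → σ} {s : σ} {L : List (List α)}
    (h : ∀ w ∈ L, w.foldl f s = s) : L.flatten.foldl f s = s := by
  induction L with
  | nil => rfl
  | cons w L ih =>
    rw [List.flatten_cons, List.foldl_append, h w List.mem_cons_self,
      ih fun w' hw' => h w' (List.mem_cons_of_mem w hw')]

lemma getD_wpow (v : List α) {M i : ℕ} (d : α) (h : i < M * v.length) :
    (wpow v M).getD i d = v.getD (i % v.length) d := by
  induction M with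
  | zero => omega
  | succ M ih =>
    rw [wpow]
    rcases lt_or_ge i (M * v.length) with h' | h'
    · rw [List.getD_append _ _ _ _ (by rwa [length_wpow]), ih h']
    · rw [List.getD_append_right _ _ _ _ (by rwa [length_wpow]), length_wpow]
      rw [Nat.succ_mul] at h
      obtain ⟨r, rfl⟩ := Nat.exists_eq_add_of_le h'
      rw [Nat.add_sub_cancel_left, Nat.mul_comm, Nat.mul_add_mod, Nat.mod_eq_of_lt (by omega)]

end Words

section UltimatelyPeriodic

variable {α : Type} [Inhabited α]

lemma upWord_add_length_mul (u v : List α) {n : ℕ} (hn : u.length ≤ n) (t : ℕ) :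
    upWord u v (n + v.length * t) = upWord u v n := by
  simp only [upWord, if_neg (show ¬n + v.length * t < u.length by omega),
    if_neg (show ¬n < u.length by omega)]
  rw [show n + v.length * t - u.length = n - u.length + v.length * t by omega,
    Nat.add_mul_mod_self_left]

lemma prefOf_append_wpow (u v : List α) (M : ℕ) : prefOf (u ++ wpow v M) (upWord u v) := by
  intro i hi
  rw [List.length_append, length_wpow] at hi
  rcases lt_or_ge i u.length with h | h
  · rw [upWord, if_pos h, List.getD_append _ _ _ _ h]
  · rw [upWord, if_neg (by omega), List.getD_append_right _ _ _ _ h, getD_wpow _ _ (by omega)]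

lemma upWord_eq_of_prefOf_s10 {u v x w : List α} (hux : u.length ≤ x.length) (hw : w ≠ [])
    (hdvd : v.length ∣ w.length) (hpref : prefOf (x ++ w) (upWord u v)) :
    upWord x w = upWord u v := by
  have hw' : 0 < w.length := List.length_pos_iff.mpr hw
  funext n
  rcases lt_or_ge n x.length with h | h
  · rw [upWord, if_pos h, hpref n (by rw [List.length_append]; omega),
      List.getD_append _ _ _ _ h]
  · obtain ⟨s, hs⟩ := hdvd
    set r := (n - x.length) % w.length
    have hr : r < w.length := Nat.mod_lt _ hw'
    have hn : n = x.length + r + v.length * (s * ((n - x.length) / w.length)) := by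
      have := Nat.mod_add_div (n - x.length) w.length
      rw [← Nat.mul_assoc, ← hs]
      omega
    rw [upWord, if_neg (by omega)]
    change w.getD r default = _
    rw [hn, upWord_add_length_mul _ _ (by omega),
      hpref _ (by rw [List.length_append]; omega), List.getD_append_right _ _ _ _ (by omega),
      Nat.add_sub_cancel_left]

lemma upWord_append_wpow {u v : List α} (hv : v ≠ []) (i : ℕ) {n : ℕ} (hn : n ≠ 0) :
    upWord (u ++ wpow v i) (wpow v n) = upWord u v := by
  refine upWord_eq_of_prefOf_s10 (by simp) (wpow_ne_nil hv hn) ⟨n, by rw [length_wpow, Nat.mul_comm]⟩ ?_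
  rw [List.append_assoc, ← wpow_add]
  exact prefOf_append_wpow u v _

lemma exists_upWord_flatten_eq {u v m : List α} {g : ℕ → List α} (hv : v ≠ [])
    (hg : ∀ n, g n ≠ []) (hpref : ∀ k, prefOf (m ++ ((List.range k).map g).flatten) (upWord u v)) :
    ∃ A d, ((List.range' A d).map g).flatten ≠ [] ∧
      upWord (m ++ ((List.range A).map g).flatten) ((List.range' A d).map g).flatten
        = upWord u v := by
  set c : ℕ → List α := fun k => m ++ ((List.range k).map g).flatten with hc
  have hsplit : ∀ A d, c (A + d) = c A ++ ((List.range' A d).map g).flatten := by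
    intro A d
    have hrange : List.range (A + d) = List.range A ++ List.range' A d := by
      rw [List.range_eq_range', List.range_eq_range', ← List.range'_append_1, Nat.zero_add]
    simp only [hc, hrange, List.map_append, List.flatten_append, List.append_assoc]
  have hlen : ∀ k, k ≤ (c k).length := by
    intro k
    induction k with
    | zero => exact Nat.zero_le _
    | succ k ih =>
      have := List.length_pos_iff.mpr (hg k)
      rw [hsplit, List.length_append, List.range'_one, List.map_singleton,
        List.flatten_singleton]
      omega
  -- two cut points past `u` at the same phase of `v` enclose a block of length divisible by `|v|`
  obtain ⟨a, b, hab, hmod⟩ := Set.Finite.exists_lt_map_eq_of_forall_mem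
    (f := fun k => (c (u.length + k)).length % v.length)
    (fun _ => Nat.mod_lt _ (List.length_pos_iff.mpr hv)) (Set.finite_Iio v.length)
  obtain ⟨d, rfl⟩ := Nat.exists_eq_add_of_lt hab
  set A := u.length + a
  have hcB : c (u.length + (a + d + 1)) = c A ++ ((List.range' A (d + 1)).map g).flatten := by
    rw [← hsplit]; congr 1; omega
  have hne : ((List.range' A (d + 1)).map g).flatten ≠ [] := List.flatten_ne_nil_iff.mpr
    ⟨g A, List.mem_map_of_mem (List.mem_range'_1.mpr ⟨le_rfl, by omega⟩), hg A⟩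
  refine ⟨A, d + 1, hne, upWord_eq_of_prefOf_s10 ?_ hne ?_ ?_⟩
  · exact (Nat.le_add_right _ _).trans (hlen _)
  · have hmod' : (c A).length + ((List.range' A (d + 1)).map g).flatten.length
        ≡ (c A).length + 0 [MOD v.length] := by
      rw [← List.length_append, ← hcB]
      exact hmod.symm
    exact Nat.modEq_zero_iff_dvd.mp (Nat.ModEq.add_left_cancel' _ hmod')
  · rw [← hcB]
    exact hpref _

end UltimatelyPeriodic

lemma exists_isPeriodicPt_iterate_self {S : Type} [Finite S] (f : S → S) (s : S) :
    ∃ n, n ≠ 0 ∧ Function.IsPeriodicPt f n (f^[n] s) := by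
  obtain ⟨a, b, hab, h⟩ := Set.Finite.exists_lt_map_eq_of_forall_mem
    (f := fun k => f^[k] s) (fun _ => Set.mem_univ _) Set.finite_univ
  have hper : Function.IsPeriodicPt f (b - a) (f^[a] s) := by
    rw [Function.IsPeriodicPt, Function.IsFixedPt, ← Function.iterate_add_apply,
      Nat.sub_add_cancel hab.le]
    exact h.symm
  obtain ⟨c, hc⟩ : ∃ c, c + a = (b - a) * (a + 1) :=
    ⟨(b - a) * (a + 1) - a, Nat.sub_add_cancel
      ((Nat.le_succ a).trans (Nat.le_mul_of_pos_left _ (Nat.sub_pos_of_lt hab)))⟩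
  have key := (hper.apply_iterate c).mul_const (a + 1)
  rw [← Function.iterate_add_apply, hc] at key
  exact ⟨_, Nat.mul_ne_zero (by omega) (by omega), key⟩

namespace DetAuto

variable {α : Type} (A : DetAuto α)

lemma eval_append (x y : List α) : A.eval (x ++ y) = A.run (A.eval x) y :=
  List.foldl_append

lemma run_wpow {q : A.State} {z : List α} (h : A.run q z = q) (k : ℕ) :
    A.run q (wpow z k) = q := by
  rw [run, foldl_wpow]
  exact Function.iterate_fixed h k

lemma normalize_of_run_eq {x z : List α} (h : A.run (A.eval x) z = A.eval x) :
    A.normalize x z = (x, z) := by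
  have hpow : ∀ k, A.eval (x ++ wpow z k) = A.eval x := fun k => by
    rw [eval_append, A.run_wpow h]
  have hi : A.normI x z = 0 := by
    rw [normI, Nat.find_eq_zero]
    exact ⟨1, le_rfl, by rw [hpow, hpow]⟩
  have hj : A.normJ x z = 1 := by
    rw [normJ, Nat.find_eq_iff]
    exact ⟨⟨le_rfl, by rw [hpow, hpow]⟩, fun n hn h => by omega⟩
  rw [normalize, hi, hj, wpow_one]
  exact Prod.ext (List.append_nil x) rfl

lemma normJ_ne_zero (u v : List α) : A.normJ u v ≠ 0 :=
  Nat.one_le_iff_ne_zero.mp (Nat.find_spec (A.normI_spec u v)).1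

lemma run_normalize (u v : List α) :
    A.run (A.eval (A.normalize u v).1) (A.normalize u v).2 = A.eval (A.normalize u v).1 := by
  rw [← eval_append, normalize, List.append_assoc, ← wpow_add]
  exact (Nat.find_spec (A.normI_spec u v)).2.symm

lemma normalize_snd_ne_nil {u v : List α} (hv : v ≠ []) : (A.normalize u v).2 ≠ [] :=
  wpow_ne_nil hv (A.normJ_ne_zero u v)

lemma upWord_normalize_wpow [Inhabited α] {u v : List α} (hv : v ≠ []) {k : ℕ} (hk : k ≠ 0) :
    upWord (A.normalize u v).1 (wpow (A.normalize u v).2 k) = upWord u v := by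
  rw [normalize, wpow_mul]
  exact upWord_append_wpow hv _ (Nat.mul_ne_zero (A.normJ_ne_zero u v) hk)

end DetAuto

namespace FDFA

variable {α : Type} (F : FDFA α)

lemma accept_iff_progAccept {x z : List α}
    (h : F.leading.run (F.leading.eval x) z = F.leading.eval x) :
    F.Accept x z ↔ F.progAccept (F.leading.eval x) z := by
  rw [Accept, F.leading.normalize_of_run_eq h]

lemma accept_of_mem_Nset {q : F.leading.State} {f : F.pState q} (hf : f ∈ F.pAcc q)
    {x w : List α} (hx : x ∈ F.Mset q) (hw : w ∈ F.Nset q f) : F.Accept x w := by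
  subst hx
  rw [F.accept_iff_progAccept hw.1, progAccept, hw.2.1]
  exact hf

lemma flatten_mem_Nset {q : F.leading.State} {f : F.pState q} {L : List (List α)} (hL : L ≠ [])
    (h : ∀ w ∈ L, w ∈ F.Nset q f) : L.flatten ∈ F.Nset q f := by
  obtain ⟨w, L, rfl⟩ := List.exists_cons_of_ne_nil hL
  refine ⟨foldl_flatten_eq_self fun w' hw' => (h w' hw').1, ?_,
    foldl_flatten_eq_self fun w' hw' => (h w' hw').2.2⟩
  rw [List.flatten_cons, List.foldl_append, (h w List.mem_cons_self).2.1]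
  exact foldl_flatten_eq_self fun w' hw' => (h w' (List.mem_cons_of_mem w hw')).2.2

variable [Inhabited α]

lemma exists_upWord_eq_of_memL {u v : List α} (hv : v ≠ []) (h : F.memL (upWord u v)) :
    ∃ q, ∃ f ∈ F.pAcc q, ∃ x ∈ F.Mset q, ∃ w ∈ F.Nset q f, w ≠ [] ∧ upWord x w = upWord u v := by
  obtain ⟨q, f, hf, m, hm, g, hg, hpref⟩ := h
  obtain ⟨A, d, hne, hup⟩ := exists_upWord_flatten_eq hv (fun n => (hg n).2) hpref
  have hgN : ∀ L : List ℕ, ∀ w ∈ L.map g, w ∈ F.Nset q f := by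
    intro L w hw
    obtain ⟨n, -, rfl⟩ := List.mem_map.mp hw
    exact (hg n).1
  obtain ⟨w, hw, -⟩ := List.flatten_ne_nil_iff.mp hne
  refine ⟨q, f, hf, _, ?_, _, F.flatten_mem_Nset (List.ne_nil_of_mem hw) (hgN _), hne, hup⟩
  change F.leading.eval (m ++ _) = q
  rw [DetAuto.eval_append, hm]
  exact foldl_flatten_eq_self fun w hw => (hgN _ w hw).1

-- The witness is the constant factorization `x·(yⁿ)^ω`, with `n` chosen so that `yⁿ` fixes the
-- progress state it reaches.
lemma memL_upWord_of_progAccept_wpow {q : F.leading.State} {x y : List α} (hx : x ∈ F.Mset q)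
    (hy : y ≠ []) (hloop : F.leading.run q y = q) (hacc : ∀ k ≠ 0, F.progAccept q (wpow y k)) :
    F.memL (upWord x y) := by
  set φ : F.pState q → F.pState q := fun s => y.foldl (F.pStep q) s
  obtain ⟨n, hn, hidem⟩ := exists_isPeriodicPt_iterate_self φ (F.pInit q)
  have hN : wpow y n ∈ F.Nset q (φ^[n] (F.pInit q)) :=
    ⟨F.leading.run_wpow hloop n, foldl_wpow _ _ _ _, (foldl_wpow _ _ _ _).trans hidem⟩
  refine ⟨q, _, ?_, x, hx, fun _ => wpow y n, fun _ => ⟨hN, wpow_ne_nil hy hn⟩, fun k => ?_⟩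
  · have := hacc n hn
    rwa [progAccept, foldl_wpow] at this
  · rw [List.map_const', List.length_range, ← wpow_eq_flatten_replicate, wpow_mul]
    exact prefOf_append_wpow x y _

end FDFA

/-- For a saturated FDFA `F`, the ω-language
`L = ⋃_{q, f ∈ F_q} M_q · N_{q,f}^ω` satisfies: `u·v^ω ∈ L` iff `F` accepts `(u,v)`. -/
theorem fdfa_to_nba_language {α : Type} [Inhabited α] (F : FDFA α) (hF : F.Saturated) :
    ∀ u v : List α, v ≠ [] → (F.memL (upWord u v) ↔ F.Accept u v) := by
  intro u v hv
  constructor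
  · intro hL
    obtain ⟨q, f, hf, x, hx, w, hw, hw0, hxw⟩ := F.exists_upWord_eq_of_memL hv hL
    exact (hF x w u v hw0 hv hxw).mp (F.accept_of_mem_Nset hf hx hw)
  · intro hacc
    set A := F.leading
    have hloop := A.run_normalize u v
    have hy := A.normalize_snd_ne_nil (u := u) hv
    have hpow : ∀ k ≠ 0, F.progAccept (A.eval (A.normalize u v).1) (wpow (A.normalize u v).2 k) :=
      fun k hk => (F.accept_iff_progAccept (A.run_wpow hloop k)).mp
        ((hF u v _ _ hv (wpow_ne_nil hy hk) (A.upWord_normalize_wpow hv hk).symm).mp hacc)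
    rw [← A.upWord_normalize_wpow hv one_ne_zero, wpow_one]
    exact F.memL_upWord_of_progAccept_wpow rfl hy hloop hpow
end

section
/- Every deterministic parity automaton recognizing the language L_n (over alphabet {1,…,n}, consisting of infinite words in which every letter i is followed by some j ≤ i+1 and the number of letters occurring infinitely often is odd) must have at least 2^(n−1) states. -/
/-! Besides the state of `D`, remember the last letter read. For a band of consecutive letters
`lo, …, lo + d`, consider a bottom strongly connected component of the extended states under
admissible words over the band. A loop there, reached from the start by `u`, gives the word
`u · l^ω`; since `D` recognizes `L_n`, the least color on the loop has the parity of the number of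
letters of `l`. Inside a bottom component for `lo, …, lo + d + 1` sit bottom components for the two
sub-bands `lo + 1, …, lo + d + 1` and `lo, …, lo + d`. If they shared a state of `D`, loops through
it reading all of their letters could be concatenated into a loop with `d + 2` letters whose least
color is that of one of the two loops, which have `d + 1` letters: a parity contradiction. So the
number of states doubles from one band width to the next. -/

open Classical

/-- The letter `a : Fin n` represents the number `a.val + 1 ∈ {1,…,n}`. A word is in
`LnSet n` iff every letter `i` is followed by a letter `j ≤ i + 1` and the number of
letters occurring infinitely often is odd. -/
def LnSet (n : ℕ) : Set (ℕ → Fin n) :=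
  {w | (∀ p : ℕ, (w (p + 1)).val ≤ (w p).val + 1) ∧
    Odd (Set.ncard {a : Fin n | {p : ℕ | w p = a}.Infinite})}

/-- Parity acceptance: the minimal color visited infinitely often along the run is odd. -/
def parityAccepts {α : Type} (A : DetAuto α) (κ : A.State → ℕ) (w : ℕ → α) : Prop :=
  Odd (sInf {c | {n | κ (A.runSeq w n) = c}.Infinite})

open List

theorem List.foldl_wpow_of_foldl_eq {α β : Type} (f : β → α → β) {b : β} {v : List α}
    (h : v.foldl f b = b) (m : ℕ) : (wpow v m).foldl f b = b := by
  induction m with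
  | zero => rfl
  | succ m ih => rw [wpow, foldl_append, ih, h]

theorem setOf_infinite_fiber_eq_image {β : Type} {f g : ℕ → β} {N L : ℕ} (hL : 0 < L)
    (h : ∀ m t, t < L → f (N + m * L + t) = g t) :
    {c | {k | f k = c}.Infinite} = g '' Set.Iio L := by
  ext c
  constructor
  · intro hc
    obtain ⟨k, hk, hNk⟩ := hc.exists_gt N
    refine ⟨(k - N) % L, Nat.mod_lt _ hL, ?_⟩
    have hdecomp : N + (k - N) / L * L + (k - N) % L = k := by
      have := Nat.div_add_mod' (k - N) L
      omega
    rw [← h _ _ (Nat.mod_lt _ hL), hdecomp]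
    exact hk
  · rintro ⟨t, ht, rfl⟩
    refine Set.infinite_of_injective_forall_mem (f := fun m => N + m * L + t) ?_ (h · t ht)
    intro a b hab
    exact Nat.eq_of_mul_eq_mul_right hL (by simpa using hab)

def takeWord {α : Type} (w : ℕ → α) (k : ℕ) : List α := (range k).map w

theorem length_takeWord {α : Type} (w : ℕ → α) (k : ℕ) : (takeWord w k).length = k := by
  simp [takeWord]

theorem takeWord_add {α : Type} (w : ℕ → α) (k l : ℕ) :
    takeWord w (k + l) = takeWord w k ++ (range l).map (fun i => w (k + i)) := by
  simp [takeWord, range_add, Function.comp_def]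

section UltimatelyPeriodic

variable {α : Type} [Inhabited α] (u v : List α)

theorem upWord_add_mul_add (m : ℕ) {t : ℕ} (ht : t < v.length) :
    upWord u v (u.length + m * v.length + t) = v.getD t default := by
  rw [upWord, if_neg (by omega), Nat.add_assoc, Nat.add_sub_cancel_left, Nat.mul_comm,
    Nat.mul_add_mod, Nat.mod_eq_of_lt ht]

theorem map_range_add_upWord (m : ℕ) {t : ℕ} (ht : t ≤ v.length) :
    (range t).map (fun i => upWord u v (u.length + m * v.length + i)) = v.take t := by
  refine ext_getElem (by simp [ht]) fun i hi _ => ?_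
  simp only [length_map, length_range] at hi
  rw [getElem_map, getElem_range, getElem_take, upWord_add_mul_add u v m (by omega),
    getD_eq_getElem]

theorem take_upWord (m : ℕ) : takeWord (upWord u v) (u.length + m * v.length) = u ++ wpow v m := by
  induction m with
  | zero =>
    refine ext_getElem (by simp [takeWord, wpow]) fun i hi _ => ?_
    simp only [takeWord, length_map, length_range, Nat.zero_mul, Nat.add_zero] at hi
    simp [takeWord, upWord, hi, wpow]
  | succ m ih =>
    rw [Nat.succ_mul, ← Nat.add_assoc, takeWord_add, ih, map_range_add_upWord u v m le_rfl,
      take_length, wpow, append_assoc]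

theorem isChain_upWord {R : α → α → Prop} (hv : v ≠ []) (h : ∀ m, IsChain R (u ++ wpow v m))
    (p : ℕ) : R (upWord u v p) (upWord u v (p + 1)) := by
  have hlen : p + 1 < u.length + (p + 2) * v.length := by
    have := length_pos_iff.2 hv
    nlinarith
  have hchain := h (p + 2)
  rw [← take_upWord, isChain_iff_getElem] at hchain
  simpa [takeWord] using hchain p (by rwa [length_takeWord])

theorem setOf_infinite_upWord_eq (hv : v ≠ []) :
    {a | {p | upWord u v p = a}.Infinite} = {a | a ∈ v} := by
  rw [setOf_infinite_fiber_eq_image (length_pos_iff.2 hv) (upWord_add_mul_add u v)]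
  ext a
  simp only [Set.mem_image, Set.mem_Iio, Set.mem_ofPred_eq, mem_iff_getElem]
  exact exists_congr fun t => ⟨fun ⟨ht, h⟩ => ⟨ht, by rwa [getD_eq_getElem] at h⟩,
    fun ⟨ht, h⟩ => ⟨ht, by rwa [getD_eq_getElem]⟩⟩

end UltimatelyPeriodic

namespace DetAuto

variable {α : Type} (A : DetAuto α)

theorem run_append (q : A.State) (u v : List α) : A.run q (u ++ v) = A.run (A.run q u) v :=
  foldl_append

theorem run_wpow_of_run_eq {q : A.State} {v : List α} (h : A.run q v = q) (m : ℕ) :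
    A.run q (wpow v m) = q :=
  foldl_wpow_of_foldl_eq A.step h m

def visited (q : A.State) (v : List α) : Set A.State :=
  (fun t => A.run q (v.take t)) '' Set.Iio v.length

theorem mem_visited_self (q : A.State) {v : List α} (hv : v ≠ []) : q ∈ A.visited q v :=
  ⟨0, length_pos_iff.2 hv, rfl⟩

theorem visited_append (q : A.State) (u v : List α) :
    A.visited q (u ++ v) = A.visited q u ∪ A.visited (A.run q u) v := by
  ext p
  simp only [visited, Set.mem_image, Set.mem_Iio, Set.mem_union, length_append]
  constructor
  · rintro ⟨t, ht, rfl⟩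
    rcases lt_or_ge t u.length with htu | htu
    · exact Or.inl ⟨t, htu, by rw [take_append_of_le_length htu.le]⟩
    · refine Or.inr ⟨t - u.length, by omega, ?_⟩
      rw [take_append, take_of_length_le htu, run_append]
  · rintro (⟨t, ht, rfl⟩ | ⟨t, ht, rfl⟩)
    · exact ⟨t, by omega, by rw [take_append_of_le_length ht.le]⟩
    · exact ⟨u.length + t, by omega, by rw [take_length_add_append, run_append]⟩

theorem runSeq_eq_eval_takeWord (w : ℕ → α) (k : ℕ) : A.runSeq w k = A.eval (takeWord w k) := by
  induction k with
  | zero => rfl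
  | succ k ih =>
    rw [takeWord, range_succ, map_append, eval, run_append, ← takeWord, ← eval, ← ih]
    rfl

variable [Inhabited α]

theorem runSeq_upWord {u v : List α} (hloop : A.run (A.eval u) v = A.eval u) (m : ℕ) {t : ℕ}
    (ht : t ≤ v.length) :
    A.runSeq (upWord u v) (u.length + m * v.length + t) = A.run (A.eval u) (v.take t) := by
  rw [runSeq_eq_eval_takeWord, takeWord_add, take_upWord, map_range_add_upWord u v m ht, eval,
    run_append, run_append, ← eval, A.run_wpow_of_run_eq hloop]

theorem parityAccepts_upWord_iff (κ : A.State → ℕ) {u v : List α} (hv : v ≠ [])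
    (hloop : A.run (A.eval u) v = A.eval u) :
    parityAccepts A κ (upWord u v) ↔ Odd (sInf (κ '' A.visited (A.eval u) v)) := by
  rw [parityAccepts, setOf_infinite_fiber_eq_image (g := fun t => κ (A.run (A.eval u) (v.take t)))
    (length_pos_iff.2 hv) fun m t ht => by rw [A.runSeq_upWord hloop m ht.le], visited,
    Set.image_image]

end DetAuto

namespace LnLowerBound

def Follows {n : ℕ} (a b : Fin n) : Prop := b.val ≤ a.val + 1

variable {n : ℕ} (D : DetAuto (Fin n))

/-- Extended states pair a state of `D` with the last letter read, which decides what may be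
read next. -/
def extStep (x : D.State × Fin n) (c : Fin n) : D.State × Fin n := (D.step x.1 c, c)

def extRun (x : D.State × Fin n) (l : List (Fin n)) : D.State × Fin n := l.foldl (extStep D) x

theorem extRun_append (x : D.State × Fin n) (l₁ l₂ : List (Fin n)) :
    extRun D x (l₁ ++ l₂) = extRun D (extRun D x l₁) l₂ :=
  foldl_append

theorem fst_extRun (x : D.State × Fin n) (l : List (Fin n)) : (extRun D x l).1 = D.run x.1 l := by
  induction l generalizing x with
  | nil => rfl
  | cons c l ih => exact ih (extStep D x c)

theorem extRun_cons_congr {x y : D.State × Fin n} (h : x.1 = y.1) (c : Fin n) (l : List (Fin n)) :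
    extRun D x (c :: l) = extRun D y (c :: l) := by
  simp only [extRun, foldl_cons, extStep, h]

theorem isChain_cons_append {x : D.State × Fin n} {l₁ l₂ : List (Fin n)}
    (h₁ : IsChain Follows (x.2 :: l₁)) (h₂ : IsChain Follows ((extRun D x l₁).2 :: l₂)) :
    IsChain Follows (x.2 :: (l₁ ++ l₂)) := by
  induction l₁ generalizing x with
  | nil => exact h₂
  | cons c l₁ ih =>
    rw [isChain_cons_cons] at h₁
    exact isChain_cons_cons.2 ⟨h₁.1, ih (x := extStep D x c) h₁.2 h₂⟩

theorem isChain_cons_wpow {x : D.State × Fin n} {l : List (Fin n)}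
    (h : IsChain Follows (x.2 :: l)) (hloop : extRun D x l = x) (m : ℕ) :
    IsChain Follows (x.2 :: wpow l m) := by
  induction m with
  | zero => exact .singleton _
  | succ m ih =>
    refine isChain_cons_append D ih ?_
    rwa [extRun, foldl_wpow_of_foldl_eq _ hloop]

def Reach (S : Set (Fin n)) (x y : D.State × Fin n) : Prop :=
  ∃ l : List (Fin n), (∀ c ∈ l, c ∈ S) ∧ IsChain Follows (x.2 :: l) ∧ extRun D x l = y

namespace Reach

variable {D} {S T : Set (Fin n)} {x y z : D.State × Fin n}

theorem refl (S : Set (Fin n)) (x : D.State × Fin n) : Reach D S x x :=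
  ⟨[], by simp, .singleton _, rfl⟩

theorem trans (h₁ : Reach D S x y) (h₂ : Reach D S y z) : Reach D S x z := by
  obtain ⟨l₁, hS₁, hc₁, rfl⟩ := h₁
  obtain ⟨l₂, hS₂, hc₂, rfl⟩ := h₂
  refine ⟨l₁ ++ l₂, ?_, isChain_cons_append D hc₁ hc₂, extRun_append D _ _ _⟩
  simpa only [mem_append] using fun c hc => hc.elim (hS₁ c) (hS₂ c)

theorem mono (h : Reach D S x y) (hST : S ⊆ T) : Reach D T x y :=
  let ⟨l, hS, hc, hl⟩ := h
  ⟨l, fun c hcl => hST (hS c hcl), hc, hl⟩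

theorem extStep {c : Fin n} (hc : c ∈ S) (hxc : Follows x.2 c) :
    Reach D S x (extStep D x c) :=
  ⟨[c], by simpa using hc, isChain_pair.2 hxc, rfl⟩

theorem snd_mem (h : Reach D S x y) (hx : x.2 ∈ S) : y.2 ∈ S := by
  obtain ⟨l, hS, -, rfl⟩ := h
  induction l generalizing x with
  | nil => exact hx
  | cons c l ih => exact ih (hS c mem_cons_self) fun d hd => hS d (mem_cons_of_mem c hd)

end Reach

/-- `x` lies in a bottom strongly connected component of the graph of extended states. -/
def IsBottom (S : Set (Fin n)) (x : D.State × Fin n) : Prop :=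
  ∀ y, Reach D S x y → Reach D S y x

variable {D} in
theorem IsBottom.of_reach {S : Set (Fin n)} {x y : D.State × Fin n} (hx : IsBottom D S x)
    (hxy : Reach D S x y) : IsBottom D S y :=
  fun z hyz => (hx z (hxy.trans hyz)).trans hxy

theorem exists_reach_isBottom (S : Set (Fin n)) (x : D.State × Fin n) :
    ∃ y, Reach D S x y ∧ IsBottom D S y := by
  obtain ⟨y, hxy, hmin⟩ := Set.exists_min_image {y | Reach D S x y}
    (fun y => {z | Reach D S y z}.ncard) (Set.toFinite _) ⟨x, Reach.refl S x⟩
  refine ⟨y, hxy, fun z hyz => ?_⟩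
  have hsub : {w | Reach D S z w} ⊆ {w | Reach D S y w} := fun w hzw => hyz.trans hzw
  have hy : y ∈ {w | Reach D S y w} := Reach.refl S y
  rwa [← Set.eq_of_subset_of_ncard_le hsub (hmin z (hxy.trans hyz)) (Set.toFinite _)] at hy

def band (lo : Fin n) (d : ℕ) : Set (Fin n) := {c | lo.val ≤ c.val ∧ c.val ≤ lo.val + d}

theorem ncard_band {lo : Fin n} {d : ℕ} (hd : lo.val + d < n) : (band lo d).ncard = d + 1 := by
  have himage : Fin.val '' band lo d = Set.Icc lo.val (lo.val + d) := by
    ext k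
    refine ⟨fun ⟨c, hc, hck⟩ => hck ▸ hc, fun hk => ⟨⟨k, by simp at hk; omega⟩, hk, rfl⟩⟩
  rw [← Set.ncard_image_of_injective _ Fin.val_injective, himage, Set.ncard_Icc_nat]
  omega

theorem band_union {lo lo' : Fin n} (hlo' : lo'.val = lo.val + 1) (d : ℕ) :
    band lo' d ∪ band lo d = band lo (d + 1) := by
  ext c
  simp only [band, Set.mem_union, Set.mem_ofPred_eq]
  omega

def stair (lo : Fin n) (d : ℕ) (hd : lo.val + d < n) : List (Fin n) :=
  ofFn fun i : Fin (d + 1) => ⟨lo.val + i, by omega⟩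

theorem stair_eq_cons {lo : Fin n} {d : ℕ} (hd : lo.val + d < n) :
    stair lo d hd = lo :: (stair lo d hd).tail := by
  simp [stair, ofFn_succ]

theorem mem_stair {lo : Fin n} {d : ℕ} (hd : lo.val + d < n) (c : Fin n) :
    c ∈ stair lo d hd ↔ c ∈ band lo d := by
  simp only [stair, mem_ofFn, band, Set.mem_ofPred_eq]
  constructor
  · rintro ⟨i, rfl⟩
    exact ⟨by simp, by simp; omega⟩
  · rintro ⟨h₁, h₂⟩
    exact ⟨⟨c.val - lo.val, by omega⟩, Fin.ext (by simp; omega)⟩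

theorem isChain_stair {lo : Fin n} {d : ℕ} (hd : lo.val + d < n) :
    IsChain Follows (stair lo d hd) :=
  isChain_ofFn.2 fun i _ => by simp [Follows]; omega

/-- Climb the stair, then return, which bottomness allows. -/
theorem exists_loop {lo : Fin n} {d : ℕ} (hd : lo.val + d < n) {z : D.State × Fin n}
    (hz : IsBottom D (band lo d) z) (hz₂ : z.2 ∈ band lo d) :
    ∃ l, IsChain Follows (lo :: l) ∧ {c | c ∈ lo :: l} = band lo d ∧
      extRun D z (lo :: l) = z := by
  set s := stair lo d hd
  have hs : s = lo :: s.tail := stair_eq_cons hd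
  have hsc : IsChain Follows (z.2 :: s) := by
    rw [hs, isChain_cons_cons, ← hs]
    exact ⟨by unfold Follows; have := hz₂.1; omega, isChain_stair hd⟩
  obtain ⟨l, hlS, hlc, hl⟩ := hz _ ⟨s, fun c => (mem_stair hd c).1, hsc, rfl⟩
  have hsl : lo :: (s.tail ++ l) = s ++ l := by rw [← cons_append, ← hs]
  refine ⟨s.tail ++ l, ?_, ?_, ?_⟩
  · rw [hsl]
    exact (isChain_cons_append D hsc hlc).tail
  · ext c
    rw [Set.mem_ofPred_eq, hsl, mem_append, mem_stair]
    exact ⟨fun h => h.elim id (hlS c), Or.inl⟩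
  · rw [hsl, extRun_append, hl]

/-- Both sides decide whether `u · l^ω` is accepted, where `u` leads from the start to `x`. -/
theorem odd_sInf_visited_iff (κ : D.State → ℕ)
    (hrec : ∀ w : ℕ → Fin n, parityAccepts D κ w ↔ w ∈ LnSet n) {a : Fin n}
    {x : D.State × Fin n} (hx : Reach D Set.univ (D.init, a) x) {l : List (Fin n)} (hl : l ≠ [])
    (hlc : IsChain Follows (x.2 :: l)) (hloop : extRun D x l = x) :
    Odd (sInf (κ '' D.visited x.1 l)) ↔ Odd {c | c ∈ l}.ncard := by
  let _ : Inhabited (Fin n) := ⟨a⟩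
  obtain ⟨u, -, hu, hux⟩ := hx
  have heval : D.eval u = x.1 := by rw [← hux, fst_extRun]; rfl
  have hrun : D.run (D.eval u) l = D.eval u := by rw [heval, ← fst_extRun, hloop]
  have hvalid : ∀ p, Follows (upWord u l p) (upWord u l (p + 1)) :=
    isChain_upWord u l hl fun m =>
      (isChain_cons_append D hu (by rw [hux]; exact isChain_cons_wpow D hlc hloop m)).tail
  rw [← heval, ← D.parityAccepts_upWord_iff κ hl hrun, hrec, LnSet, Set.mem_ofPred_eq,
    setOf_infinite_upWord_eq u l hl]
  exact and_iff_right hvalid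

/-- A common state would carry loops with `d + 1` letters each, whose concatenation has `d + 2`
letters and no new color. -/
theorem disjoint_image_fst_reach (κ : D.State → ℕ)
    (hrec : ∀ w : ℕ → Fin n, parityAccepts D κ w ↔ w ∈ LnSet n) {a lo lo' : Fin n} {d : ℕ}
    (hlo' : lo'.val = lo.val + 1) (hd : lo'.val + d < n) {xL xR : D.State × Fin n}
    (hxL : Reach D Set.univ (D.init, a) xL) (hxR : Reach D Set.univ (D.init, a) xR)
    (hbL : IsBottom D (band lo' d) xL) (hbR : IsBottom D (band lo d) xR)
    (hxL₂ : xL.2 ∈ band lo' d) (hxR₂ : xR.2 ∈ band lo d) :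
    Disjoint (Prod.fst '' {y | Reach D (band lo' d) xL y})
      (Prod.fst '' {y | Reach D (band lo d) xR y}) := by
  rw [Set.disjoint_left]
  rintro _ ⟨zL, hzL, rfl⟩ ⟨zR, hzR, hr⟩
  have hzL₂ := hzL.snd_mem hxL₂
  have hzR₂ := hzR.snd_mem hxR₂
  have hzL_lo : lo'.val ≤ zL.2.val := hzL₂.1
  have hzR_lo : lo.val ≤ zR.2.val := hzR₂.1
  obtain ⟨lL, hcL, hsetL, hloopL⟩ := exists_loop D hd (hbL.of_reach hzL) hzL₂
  obtain ⟨lR, hcR, hsetR, hloopR⟩ := exists_loop D (by omega) (hbR.of_reach hzR) hzR₂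
  have hzRL : extRun D zR (lo' :: lL) = zL := by rw [extRun_cons_congr D hr, hloopL]
  have hzLR : extRun D zL (lo :: lR) = zR := by rw [extRun_cons_congr D hr.symm, hloopR]
  have hreachL := hxL.trans (hzL.mono (Set.subset_univ _))
  have hreachR := hxR.trans (hzR.mono (Set.subset_univ _))
  have hLL : IsChain Follows (zL.2 :: lo' :: lL) :=
    isChain_cons_cons.2 ⟨by unfold Follows; omega, hcL⟩
  have hRL : IsChain Follows (zR.2 :: lo' :: lL) :=
    isChain_cons_cons.2 ⟨by unfold Follows; omega, hcL⟩
  have hLR : IsChain Follows (zL.2 :: lo :: lR) :=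
    isChain_cons_cons.2 ⟨by unfold Follows; omega, hcR⟩
  have hRR : IsChain Follows (zR.2 :: lo :: lR) :=
    isChain_cons_cons.2 ⟨by unfold Follows; omega, hcR⟩
  have hL := odd_sInf_visited_iff D κ hrec hreachL (cons_ne_nil _ _) hLL hloopL
  have hR := odd_sInf_visited_iff D κ hrec hreachR (cons_ne_nil _ _) hRR hloopR
  have hW := odd_sInf_visited_iff D κ hrec hreachR (l := (lo' :: lL) ++ (lo :: lR)) (by simp)
    (isChain_cons_append D hRL (by rwa [hzRL])) (by rw [extRun_append, hzRL, hzLR])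
  have hletters : {c | c ∈ (lo' :: lL) ++ (lo :: lR)} = band lo (d + 1) := by
    rw [← band_union hlo', ← hsetL, ← hsetR]
    ext c
    simp only [Set.mem_ofPred_eq, Set.mem_union, mem_append]
  have hvisited : D.visited zR.1 ((lo' :: lL) ++ (lo :: lR)) =
      D.visited zL.1 (lo' :: lL) ∪ D.visited zR.1 (lo :: lR) := by
    rw [DetAuto.visited_append, ← fst_extRun, hzRL, hr]
  rw [hsetL, ncard_band hd] at hL
  rw [hsetR, ncard_band (by omega)] at hR
  rw [hletters, ncard_band (by omega), hvisited, Set.image_union,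
    csInf_union (OrderBot.bddBelow _) (.image κ ⟨_, D.mem_visited_self _ (cons_ne_nil _ _)⟩)
      (OrderBot.bddBelow _) (.image κ ⟨_, D.mem_visited_self _ (cons_ne_nil _ _)⟩)] at hW
  rcases le_total (sInf (κ '' D.visited zL.1 (lo' :: lL))) (sInf (κ '' D.visited zR.1 (lo :: lR)))
    with h | h
  · rw [inf_eq_left.2 h, hL, Nat.odd_add_one (n := d + 1)] at hW
    exact iff_not_self hW
  · rw [inf_eq_right.2 h, hR, Nat.odd_add_one (n := d + 1)] at hW
    exact iff_not_self hW

theorem exists_isBottom_of_follows {S T : Set (Fin n)} (hST : S ⊆ T) {x : D.State × Fin n}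
    {c : Fin n} (hc : c ∈ S) (hxc : Follows x.2 c) :
    ∃ y, Reach D T x y ∧ IsBottom D S y ∧ y.2 ∈ S := by
  obtain ⟨y, hy, hb⟩ := exists_reach_isBottom D S (extStep D x c)
  exact ⟨y, (Reach.extStep (hST hc) hxc).trans (hy.mono hST), hb, hy.snd_mem hc⟩

variable {D} in
theorem image_fst_reach_subset {S T : Set (Fin n)} (hST : S ⊆ T) {x y : D.State × Fin n}
    (hxy : Reach D T x y) :
    Prod.fst '' {z | Reach D S y z} ⊆ Prod.fst '' {z | Reach D T x z} :=
  Set.image_mono fun _ hyz => hxy.trans (Reach.mono hyz hST)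

/-- The bottom component contains bottom components over both sub-bands, which share no state
of `D`. -/
theorem two_pow_le_ncard_image_fst (κ : D.State → ℕ)
    (hrec : ∀ w : ℕ → Fin n, parityAccepts D κ w ↔ w ∈ LnSet n) {a : Fin n} (d : ℕ) :
    ∀ {lo : Fin n}, lo.val + d < n → ∀ {x : D.State × Fin n}, Reach D Set.univ (D.init, a) x →
      IsBottom D (band lo d) x → x.2 ∈ band lo d →
      2 ^ d ≤ (Prod.fst '' {y | Reach D (band lo d) x y}).ncard := by
  induction d with
  | zero =>
    intro lo _ x _ _ _
    exact (Set.ncard_pos (Set.toFinite _)).2 ⟨x.1, x, Reach.refl _ x, rfl⟩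
  | succ d ih =>
    intro lo hd x hx hb hx₂
    set lo' : Fin n := ⟨lo.val + 1, by omega⟩
    have hunion := band_union (lo' := lo') rfl d
    have hsubL : band lo' d ⊆ band lo (d + 1) := hunion ▸ Set.subset_union_left
    have hsubR : band lo d ⊆ band lo (d + 1) := hunion ▸ Set.subset_union_right
    have hlo : lo.val ≤ x.2.val := hx₂.1
    obtain ⟨xL, hxxL, hbL, hxL₂⟩ := exists_isBottom_of_follows D hsubL (c := lo')
      ⟨le_rfl, by simp [lo']⟩ (show lo.val + 1 ≤ x.2.val + 1 by omega)
    obtain ⟨xR, hxxR, hbR, hxR₂⟩ := exists_isBottom_of_follows D hsubR (c := lo)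
      ⟨le_rfl, by simp⟩ (show lo.val ≤ x.2.val + 1 by omega)
    have hreach {y} (hy : Reach D (band lo (d + 1)) x y) : Reach D Set.univ (D.init, a) y :=
      hx.trans (hy.mono (Set.subset_univ _))
    calc 2 ^ (d + 1) = 2 ^ d + 2 ^ d := by ring
      _ ≤ (Prod.fst '' {y | Reach D (band lo' d) xL y}).ncard +
          (Prod.fst '' {y | Reach D (band lo d) xR y}).ncard :=
        add_le_add (ih (by simp [lo']; omega) (hreach hxxL) hbL hxL₂)
          (ih (by omega) (hreach hxxR) hbR hxR₂)
      _ = (Prod.fst '' {y | Reach D (band lo' d) xL y} ∪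
          Prod.fst '' {y | Reach D (band lo d) xR y}).ncard :=
        (Set.ncard_union_eq (disjoint_image_fst_reach D κ hrec rfl (by simp [lo']; omega)
          (hreach hxxL) (hreach hxxR) hbL hbR hxL₂ hxR₂) (Set.toFinite _) (Set.toFinite _)).symm
      _ ≤ (Prod.fst '' {y | Reach D (band lo (d + 1)) x y}).ncard :=
        Set.ncard_le_ncard (Set.union_subset
          (image_fst_reach_subset hsubL hxxL) (image_fst_reach_subset hsubR hxxR)) (Set.toFinite _)

end LnLowerBound

open LnLowerBound

/-- Every deterministic parity automaton recognizing `L_n` has at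
least `2^(n-1)` states. -/
theorem dpa_for_Ln_lower_bound (n : ℕ) (hn : 0 < n) (D : DetAuto (Fin n))
    (κ : D.State → ℕ) (hrec : ∀ w : ℕ → Fin n, parityAccepts D κ w ↔ w ∈ LnSet n) :
    2 ^ (n - 1) ≤ Fintype.card D.State := by
  let a : Fin n := ⟨0, hn⟩
  obtain ⟨x, hx, hb⟩ := exists_reach_isBottom D (band a (n - 1)) (D.init, a)
  calc 2 ^ (n - 1) ≤ (Prod.fst '' {y | Reach D (band a (n - 1)) x y}).ncard :=
        two_pow_le_ncard_image_fst D κ hrec (n - 1) (by simp [a]; omega)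
          (hx.mono (Set.subset_univ _)) hb (hx.snd_mem ⟨le_rfl, by simp [a]⟩)
    _ ≤ Nat.card D.State := Set.ncard_le_card _
    _ = Fintype.card D.State := Nat.card_eq_fintype_card
end
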